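/- Let k ≥ 1 be an integer and let {X_i}_{i≥1} be i.i.d. positive-integer-valued random variables with weights W_n = X_1 + ... + X_n. The event that the sequence {W_n}_{n≥1} is asymptotically k-complete is independent of the sigma-algebra generated by (X_1, ..., X_m) for every m; in particular it is a tail event of the sequence {X_i}_{i≥1} and hence has probability 0 or 1. The same holds for the event that {W_n}_{n≥1} is weakly asymptotically k-complete. -/

import Mathlib

/-!
Write `E_m` for the event that the shifted gap sequence `(X_{m+i})_i` lies in a measurable set `G`
of gap sequences. If membership of `g ∘ succ` in `G` forces membership of `g`, the `E_m` decrease,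
and since the gaps are i.i.d. they all have the probability of `E_0`. Their intersection is a tail
event, hence has probability `0` or `1` by Kolmogorov, and by continuity from above it has the
probability of `E_0`. Asymptotic `k`-completeness is such a property: dropping the first weight and
lowering the others by the first gap `c` lowers every `k`-fold sum by `k c`, so completeness of the
shifted weights gives completeness of the original ones. An event of probability `0` or `1` is
independent of everything.
-/

open MeasureTheory ProbabilityTheory Filter Finset

section ZeroOne

lemma ProbabilityTheory.measurable_shift_iSup_comap {Ω β : Type*} [MeasurableSpace β]
    {X : ℕ → Ω → β} {n m : ℕ} (hnm : n ≤ m) :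
    Measurable[⨆ j ≥ n, MeasurableSpace.comap (X j) inferInstance] (fun ω i => X (i + m) ω) :=
  @measurable_pi_lambda _ _ _ (_) _ _ fun i => measurable_iff_comap_le.2 <|
    le_iSup₂ (f := fun j (_ : j ≥ n) => MeasurableSpace.comap (X j) inferInstance) (i + m)
      (by omega)

variable {Ω β : Type*} [MeasurableSpace Ω] [MeasurableSpace β] {μ : Measure Ω}
  [IsProbabilityMeasure μ]

lemma ProbabilityTheory.iIndepFun.measure_zero_or_one_of_succ_mem {X : ℕ → Ω → β}
    (hmeas : ∀ i, Measurable (X i)) (hindep : iIndepFun X μ)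
    (hident : ∀ i, IdentDistrib (X i) (X 0) μ μ)
    {G : Set (ℕ → β)} (hG : MeasurableSet G) (hshift : ∀ g, g ∘ Nat.succ ∈ G → g ∈ G) :
    μ ((fun ω i => X i ω) ⁻¹' G) = 0 ∨ μ ((fun ω i => X i ω) ⁻¹' G) = 1 := by
  set E : ℕ → Set Ω := fun m => (fun ω i => X (i + m) ω) ⁻¹' G with hE
  have hE_anti : Antitone E := antitone_nat_of_succ_le fun m ω hω => hshift _ <| by
    simpa only [hE, Set.mem_preimage, Function.comp_def, Nat.succ_add_eq_add_succ,
      Nat.succ_eq_add_one] using hω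
  have hE_measure (m : ℕ) : μ (E m) = μ (E 0) :=
    (IdentDistrib.pi (fun i => (hident (i + m)).trans (hident i).symm)
      (hindep.precomp (add_left_injective m)) hindep).measure_mem_eq hG
  have hE_iInter : μ (⋂ m, E m) = μ (E 0) := by
    rw [hE_anti.measure_iInter (fun m => (measurable_pi_lambda _ fun i => hmeas _) hG
      |>.nullMeasurableSet) ⟨0, measure_ne_top _ _⟩]
    simp only [hE_measure, ciInf_const]
  have h_tail : MeasurableSet[limsup (fun i => MeasurableSpace.comap (X i) inferInstance) atTop]
      (⋂ m, E m) := by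
    rw [limsup_eq_iInf_iSup_of_nat, MeasurableSpace.measurableSet_iInf]
    intro n
    rw [← hE_anti.iInter_nat_add n]
    exact .iInter fun m => measurable_shift_iSup_comap (Nat.le_add_left n m) hG
  change μ (E 0) = 0 ∨ μ (E 0) = 1
  rw [← hE_iInter]
  exact measure_zero_or_one_of_measurableSet_limsup_atTop (fun i => (hmeas i).comap_le)
    hindep.iIndep h_tail

lemma measure_inter_eq_mul_of_measure_eq_zero_or_one {C : Set Ω} (hC : MeasurableSet C)
    (h01 : μ C = 0 ∨ μ C = 1) (s : Set Ω) : μ (C ∩ s) = μ C * μ s := by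
  rcases h01 with h | h
  · rw [h, zero_mul]
    exact measure_mono_null Set.inter_subset_left h
  · rw [h, one_mul, Set.inter_comm]
    exact measure_inter_conull ((prob_compl_eq_zero_iff hC).2 h)

end ZeroOne

section Completeness

def IsAsymptoticallyComplete (k : ℕ) (w : ℕ → ℕ) : Prop :=
  ∃ N : ℕ, ∀ m : ℕ, N ≤ m → ∃ s : Finset ℕ, s.card = k ∧ (∀ i ∈ s, 1 ≤ i) ∧ ∑ i ∈ s, w i = m

def IsWeaklyAsymptoticallyComplete (k : ℕ) (w : ℕ → ℕ) : Prop :=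
  ∃ N : ℕ, ∀ m : ℕ, N ≤ m → ∃ f : Fin k → ℕ, (∀ j, 1 ≤ f j) ∧ ∑ j, w (f j) = m

lemma measurableSet_isAsymptoticallyComplete (k : ℕ) :
    MeasurableSet {w : ℕ → ℕ | IsAsymptoticallyComplete k w} := by
  unfold IsAsymptoticallyComplete
  measurability

lemma measurableSet_isWeaklyAsymptoticallyComplete (k : ℕ) :
    MeasurableSet {w : ℕ → ℕ | IsWeaklyAsymptoticallyComplete k w} := by
  unfold IsWeaklyAsymptoticallyComplete
  measurability

variable {k c : ℕ} {w w' : ℕ → ℕ}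

lemma IsAsymptoticallyComplete.of_succ (h : IsAsymptoticallyComplete k w')
    (hw : ∀ n, w (n + 1) = c + w' n) : IsAsymptoticallyComplete k w := by
  obtain ⟨N, hN⟩ := h
  refine ⟨N + k * c, fun m hm => ?_⟩
  obtain ⟨s, hcard, -, hsum⟩ := hN (m - k * c) (by omega)
  refine ⟨s.map (addRightEmbedding 1), by rw [card_map, hcard], by simp, ?_⟩
  rw [sum_map]
  simp only [addRightEmbedding_apply, hw, sum_add_distrib, hsum, sum_const, hcard, smul_eq_mul]
  omega

lemma IsWeaklyAsymptoticallyComplete.of_succ (h : IsWeaklyAsymptoticallyComplete k w')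
    (hw : ∀ n, w (n + 1) = c + w' n) : IsWeaklyAsymptoticallyComplete k w := by
  obtain ⟨N, hN⟩ := h
  refine ⟨N + k * c, fun m hm => ?_⟩
  obtain ⟨f, -, hsum⟩ := hN (m - k * c) (by omega)
  refine ⟨fun j => f j + 1, fun j => Nat.le_add_left 1 (f j), ?_⟩
  simp only [hw, sum_add_distrib, hsum, sum_const, card_univ, Fintype.card_fin, smul_eq_mul]
  omega

end Completeness

section Weights

def partialSum (g : ℕ → ℕ) (n : ℕ) : ℕ := ∑ i ∈ Icc 1 n, g i

lemma partialSum_succ (g : ℕ → ℕ) (n : ℕ) :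
    partialSum g (n + 1) = g 1 + partialSum (g ∘ Nat.succ) n := by
  induction n with
  | zero => simp [partialSum]
  | succ n ih =>
    rw [partialSum, sum_Icc_succ_top (by omega), ← partialSum, ih, partialSum, partialSum,
      sum_Icc_succ_top (by omega), add_assoc]
    rfl

lemma measurable_partialSum : Measurable partialSum := by
  unfold partialSum
  fun_prop

variable {Ω : Type*} [MeasurableSpace Ω] {μ : Measure Ω} [IsProbabilityMeasure μ]
  {X : ℕ → Ω → ℕ}

lemma ProbabilityTheory.iIndepFun.measurableSet_and_measure_partialSum_mem_zero_or_one
    (hmeas : ∀ i, Measurable (X i)) (hindep : iIndepFun X μ)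
    (hident : ∀ i, IdentDistrib (X i) (X 0) μ μ) {S : Set (ℕ → ℕ)} (hS : MeasurableSet S)
    (hshift : ∀ c w w', w' ∈ S → (∀ n, w (n + 1) = c + w' n) → w ∈ S) :
    MeasurableSet {ω | partialSum (X · ω) ∈ S} ∧
      (μ {ω | partialSum (X · ω) ∈ S} = 0 ∨ μ {ω | partialSum (X · ω) ∈ S} = 1) :=
  ⟨measurable_pi_lambda _ hmeas (measurable_partialSum hS),
    hindep.measure_zero_or_one_of_succ_mem hmeas hident (measurable_partialSum hS)
      fun g hg => hshift _ _ _ hg (partialSum_succ g)⟩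

end Weights

theorem stmt11_general
    {Ω : Type*} [MeasurableSpace Ω] (μ : Measure Ω) [IsProbabilityMeasure μ]
    (k : ℕ)
    (X : ℕ → Ω → ℕ)
    (hmeas : ∀ i, Measurable (X i))
    (hindep : iIndepFun X μ)
    (hident : ∀ i, IdentDistrib (X i) (X 1) μ μ)
    (W : ℕ → Ω → ℕ)
    (hW : ∀ n ω, W n ω = ∑ i ∈ Finset.Icc 1 n, X i ω)
    (C : Set Ω)
    (hC : C = {ω | ∃ N : ℕ, ∀ m : ℕ, N ≤ m →
      ∃ s : Finset ℕ, s.card = k ∧ (∀ i ∈ s, 1 ≤ i) ∧ ∑ i ∈ s, W i ω = m})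
    (Cw : Set Ω)
    (hCw : Cw = {ω | ∃ N : ℕ, ∀ m : ℕ, N ≤ m →
      ∃ f : Fin k → ℕ, (∀ j, 1 ≤ f j) ∧ ∑ j, W (f j) ω = m}) :
    (∀ m : ℕ, ∀ s : Set Ω,
        MeasurableSet[⨆ i ∈ Finset.Icc 1 m, MeasurableSpace.comap (X i) inferInstance] s →
        μ (C ∩ s) = μ C * μ s) ∧
    (μ C = 0 ∨ μ C = 1) ∧
    (∀ m : ℕ, ∀ s : Set Ω,
        MeasurableSet[⨆ i ∈ Finset.Icc 1 m, MeasurableSpace.comap (X i) inferInstance] s →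
        μ (Cw ∩ s) = μ Cw * μ s) ∧
    (μ Cw = 0 ∨ μ Cw = 1) := by
  obtain rfl : W = fun n ω => partialSum (X · ω) n := funext₂ hW
  have hident₀ (i : ℕ) : IdentDistrib (X i) (X 0) μ μ := (hident i).trans (hident 0).symm
  obtain ⟨hC_meas, hC01⟩ : MeasurableSet C ∧ (μ C = 0 ∨ μ C = 1) := hC ▸
    hindep.measurableSet_and_measure_partialSum_mem_zero_or_one hmeas hident₀
      (measurableSet_isAsymptoticallyComplete k) fun _ _ _ h hw => h.of_succ hw
  obtain ⟨hCw_meas, hCw01⟩ : MeasurableSet Cw ∧ (μ Cw = 0 ∨ μ Cw = 1) := hCw ▸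
    hindep.measurableSet_and_measure_partialSum_mem_zero_or_one hmeas hident₀
      (measurableSet_isWeaklyAsymptoticallyComplete k) fun _ _ _ h hw => h.of_succ hw
  exact ⟨fun _ s _ => measure_inter_eq_mul_of_measure_eq_zero_or_one hC_meas hC01 s, hC01,
    fun _ s _ => measure_inter_eq_mul_of_measure_eq_zero_or_one hCw_meas hCw01 s, hCw01⟩

/-- For i.i.d. positive integer gaps, the event that the weight sequence is
asymptotically `k`-complete is independent of `σ(X₁,…,X_m)` for every `m`, and
has probability `0` or `1`; the same holds for weak asymptotic `k`-completeness. -/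
theorem stmt11
    {Ω : Type*} [MeasurableSpace Ω] (μ : Measure Ω) [IsProbabilityMeasure μ]
    (k : ℕ) (hk : 1 ≤ k)
    (X : ℕ → Ω → ℕ)
    (hmeas : ∀ i, Measurable (X i))
    (hpos : ∀ i ω, 0 < X i ω)
    (hindep : iIndepFun X μ)
    (hident : ∀ i, IdentDistrib (X i) (X 1) μ μ)
    (W : ℕ → Ω → ℕ)
    (hW : ∀ n ω, W n ω = ∑ i ∈ Finset.Icc 1 n, X i ω)
    (C : Set Ω)
    (hC : C = {ω | ∃ N : ℕ, ∀ m : ℕ, N ≤ m →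
      ∃ s : Finset ℕ, s.card = k ∧ (∀ i ∈ s, 1 ≤ i) ∧ ∑ i ∈ s, W i ω = m})
    (Cw : Set Ω)
    (hCw : Cw = {ω | ∃ N : ℕ, ∀ m : ℕ, N ≤ m →
      ∃ f : Fin k → ℕ, (∀ j, 1 ≤ f j) ∧ ∑ j, W (f j) ω = m}) :
    (∀ m : ℕ, ∀ s : Set Ω,
        MeasurableSet[⨆ i ∈ Finset.Icc 1 m, MeasurableSpace.comap (X i) inferInstance] s →
        μ (C ∩ s) = μ C * μ s) ∧
    (μ C = 0 ∨ μ C = 1) ∧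
    (∀ m : ℕ, ∀ s : Set Ω,
        MeasurableSet[⨆ i ∈ Finset.Icc 1 m, MeasurableSpace.comap (X i) inferInstance] s →
        μ (Cw ∩ s) = μ Cw * μ s) ∧
    (μ Cw = 0 ∨ μ Cw = 1) :=
  stmt11_general μ k X hmeas hindep hident W hW C hC Cw hCw
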